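/- If a VM is active during a contiguous interval [t₁, t₂) and inactive before t₁, then the total idle cost incurred by that VM is at least X_idle · (t₂ − t₁ + 1), accounting for at least one turning-on step. -/
import Mathlib


theorem idle_cost_lower_bound
    (t₁ t₂ : ℤ) (ht : t₁ < t₂) (Xidle : ℝ) (hX : 0 < Xidle)
    (O U : ℤ → ℝ)
    (hO01 : ∀ t, O t = 0 ∨ O t = 1) (hU01 : ∀ t, U t = 0 ∨ U t = 1)
    (hOn : ∀ t, t₁ ≤ t → t < t₂ → O t = 1)
    (hOff : ∀ t < t₁, O t = 0)
    (hexcl : ∀ t, O t + U t ≤ 1)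
    (hsetup : ∀ t, O t ≤ O (t - 1) + U (t - 1)) :
    Xidle * ((t₂ : ℝ) - t₁ + 1) ≤ ∑ t ∈ Finset.Icc (t₁ - 1) (t₂ - 1), Xidle * (U t + O t) := by
  have hterm : ∀ t ∈ Finset.Icc (t₁ - 1) (t₂ - 1), Xidle ≤ Xidle * (U t + O t) := by
    intro t htmem
    rw [Finset.mem_Icc] at htmem
    have h1 : (1 : ℝ) ≤ U t + O t := by
      rcases eq_or_lt_of_le htmem.1 with h | h
      · -- t = t₁ - 1
        have hO1 : O t₁ = 1 := hOn t₁ le_rfl ht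
        have hs := hsetup t₁
        rw [hO1, hOff (t₁ - 1) (by omega)] at hs
        have hUt : U (t₁ - 1) = 1 := by
          rcases hU01 (t₁ - 1) with h0 | h1
          · rw [h0] at hs; linarith
          · exact h1
        have hO0 : O (t₁ - 1) = 0 := hOff _ (by omega)
        rw [← h, hUt, hO0]; norm_num
      · have hOt : O t = 1 := hOn t (by omega) (by omega)
        have hUt : (0:ℝ) ≤ U t := by rcases hU01 t with ha | ha <;> simp [ha]
        rw [hOt]; linarith
    nlinarith
  calc Xidle * ((t₂ : ℝ) - t₁ + 1)
      = (Finset.Icc (t₁ - 1) (t₂ - 1)).card • Xidle := by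
        rw [Int.card_Icc]
        have h1 : t₂ - 1 + 1 - (t₁ - 1) = t₂ - t₁ + 1 := by ring
        rw [h1]
        have h2 : ((t₂ - t₁ + 1).toNat : ℝ) = (t₂ : ℝ) - t₁ + 1 := by
          have : ((t₂ - t₁ + 1).toNat : ℤ) = t₂ - t₁ + 1 := Int.toNat_of_nonneg (by omega)
          rw [← Int.cast_natCast, this]; push_cast; ring
        rw [nsmul_eq_mul, h2, mul_comm]
    _ ≤ ∑ t ∈ Finset.Icc (t₁ - 1) (t₂ - 1), Xidle * (U t + O t) :=
        Finset.card_nsmul_le_sum _ _ _ hterm
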